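/- Let A ∈ M_n(ℂ) with A11 invertible. Then A is a P-matrix if and only if ppt(A) is a P-matrix. -/

import Mathlib

/-- A complex matrix is a P-matrix if every principal minor is a positive real
number. -/
def IsPMatrix {ι : Type*} [Fintype ι] [DecidableEq ι] (A : Matrix ι ι ℂ) : Prop :=
  ∀ α : Finset ι, α.Nonempty →
    ∃ r : ℝ, 0 < r ∧
      (A.submatrix (fun i : {x // x ∈ α} => (i : ι))
        (fun i : {x // x ∈ α} => (i : ι))).det = (r : ℂ)

/-!
Write `K` for the block of rows and columns indexed by `k`, and let `M[S]` be the rows of `M`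
indexed by `S` completed by rows of the identity, so that `det M[S]` is the principal minor on `S`.
With `C = [[M₁₁, M₁₂], [0, 1]] = M[K]` one checks `ppt M * C = [[1, 0], [M₂₁, M₂₂]]`, and hence
`(ppt M)[S] * C = M[S ∆ K]`. Taking determinants,
`det (ppt M)[S] * det M₁₁ = det M[S ∆ K]`: every principal minor of `ppt M` is a principal minor
of `M` divided by the principal minor `det M₁₁`, so `ppt` preserves P-matrices.
The converse follows because `ppt` is an involution.
-/

open Finset
open scoped symmDiff

theorem Finset.piecewise_piecewise_symmDiff {ι : Type*} [DecidableEq ι] {δ : ι → Sort*}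
    (s t : Finset ι) (f g : ∀ i, δ i) :
    s.piecewise (t.piecewise g f) (t.piecewise f g) = (s ∆ t).piecewise f g := by
  ext i
  by_cases hs : i ∈ s <;> by_cases ht : i ∈ t <;> simp [piecewise, hs, ht, mem_symmDiff]

namespace Matrix

section PiecewiseRows

variable {m n R : Type*} [DecidableEq m]

def piecewiseRows (S : Finset m) (M N : Matrix m n R) : Matrix m n R :=
  of (S.piecewise M N)

@[simp]
theorem piecewiseRows_apply (S : Finset m) (M N : Matrix m n R) (i : m) (j : n) :
    piecewiseRows S M N i j = if i ∈ S then M i j else N i j := by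
  simp only [piecewiseRows, of_apply, Finset.piecewise, apply_ite (fun f : n → R => f j)]

theorem piecewiseRows_piecewiseRows_symmDiff (S T : Finset m) (M N : Matrix m n R) :
    piecewiseRows S (piecewiseRows T N M) (piecewiseRows T M N) = piecewiseRows (S ∆ T) M N :=
  Finset.piecewise_piecewise_symmDiff S T M N

theorem piecewiseRows_mul [Fintype n] [NonUnitalNonAssocSemiring R] {p : Type*}
    (S : Finset m) (M N : Matrix m n R) (P : Matrix n p R) :
    piecewiseRows S M N * P = piecewiseRows S (M * P) (N * P) := by
  ext i j
  by_cases hi : i ∈ S <;> simp [mul_apply, hi]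

theorem piecewiseRows_inl_fromBlocks {k l n₁ n₂ : Type*} [Fintype k] [DecidableEq k]
    [DecidableEq l]
    (A B C D A' B' C' D' : Matrix _ _ R) :
    piecewiseRows (univ.map .inl) (fromBlocks A B C D : Matrix (k ⊕ l) (n₁ ⊕ n₂) R)
      (fromBlocks A' B' C' D') = fromBlocks A B C' D' := by
  ext (i | i) (j | j) <;> simp

theorem det_piecewiseRows_one [Fintype m] [CommRing R] (S : Finset m) (M : Matrix m m R) :
    (piecewiseRows S M 1).det = (M.submatrix ((↑) : S → m) (↑)).det := by
  rw [twoBlockTriangular_det _ (· ∈ S)]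
  · have h₁ : toSquareBlockProp (piecewiseRows S M 1) (· ∈ S) = M.submatrix (↑) (↑) := by
      ext i j
      simp [toSquareBlockProp, i.2]
    have h₂ : toSquareBlockProp (piecewiseRows S M 1) (· ∉ S) = 1 := by
      ext i j
      simp [toSquareBlockProp, i.2, one_apply, Subtype.ext_iff]
    rw [h₁, h₂, det_one, mul_one]
    -- the two sides use different `Fintype` instances on the subtype `{x // x ∈ S}`
    convert rfl
  · intro i hi j hj
    simp [hi, one_apply_ne (fun h : i = j => hi (h ▸ hj))]

end PiecewiseRows

section PrincipalPivot

variable {k l R : Type*} [Fintype k] [DecidableEq k] [CommRing R]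

noncomputable def ppt (M : Matrix (k ⊕ l) (k ⊕ l) R) : Matrix (k ⊕ l) (k ⊕ l) R :=
  fromBlocks M.toBlocks₁₁⁻¹ (-(M.toBlocks₁₁⁻¹ * M.toBlocks₁₂)) (M.toBlocks₂₁ * M.toBlocks₁₁⁻¹)
    (M.toBlocks₂₂ - M.toBlocks₂₁ * M.toBlocks₁₁⁻¹ * M.toBlocks₁₂)

theorem ppt_fromBlocks (A : Matrix k k R) (B : Matrix k l R) (C : Matrix l k R)
    (D : Matrix l l R) :
    ppt (fromBlocks A B C D) = fromBlocks A⁻¹ (-(A⁻¹ * B)) (C * A⁻¹) (D - C * A⁻¹ * B) := by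
  simp only [ppt, toBlocks_fromBlocks₁₁, toBlocks_fromBlocks₁₂, toBlocks_fromBlocks₂₁,
    toBlocks_fromBlocks₂₂]

theorem ppt_ppt {M : Matrix (k ⊕ l) (k ⊕ l) R} (h : IsUnit M.toBlocks₁₁.det) :
    ppt (ppt M) = M := by
  conv_lhs => rw [← fromBlocks_toBlocks M, ppt_fromBlocks, ppt_fromBlocks]
  conv_rhs => rw [← fromBlocks_toBlocks M]
  rw [nonsing_inv_nonsing_inv _ h]
  congr 1 <;> simp [Matrix.mul_assoc, mul_nonsing_inv_cancel_left _ _ h, nonsing_inv_mul _ h]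

variable [Fintype l] [DecidableEq l]

theorem ppt_mul_piecewiseRows_inl {M : Matrix (k ⊕ l) (k ⊕ l) R}
    (h : IsUnit M.toBlocks₁₁.det) :
    ppt M * piecewiseRows (univ.map .inl) M 1 = piecewiseRows (univ.map .inl) 1 M := by
  conv_lhs => rw [← fromBlocks_toBlocks M, ← fromBlocks_one]
  conv_rhs => rw [← fromBlocks_toBlocks M, ← fromBlocks_one]
  simp only [piecewiseRows_inl_fromBlocks, ppt, toBlocks_fromBlocks₁₁, fromBlocks_multiply]
  simp [Matrix.mul_assoc, nonsing_inv_mul _ h]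

theorem det_submatrix_inl (M : Matrix (k ⊕ l) (k ⊕ l) R) :
    (M.submatrix ((↑) : univ.map (.inl : k ↪ k ⊕ l) → k ⊕ l) (↑)).det = M.toBlocks₁₁.det := by
  rw [← det_piecewiseRows_one, ← fromBlocks_toBlocks M, ← fromBlocks_one,
    piecewiseRows_inl_fromBlocks, det_fromBlocks_zero₂₁, det_one, mul_one, toBlocks_fromBlocks₁₁]

theorem det_submatrix_ppt_mul_det_toBlocks₁₁ {M : Matrix (k ⊕ l) (k ⊕ l) R}
    (h : IsUnit M.toBlocks₁₁.det) (S : Finset (k ⊕ l)) :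
    ((ppt M).submatrix ((↑) : S → k ⊕ l) (↑)).det * M.toBlocks₁₁.det =
      (M.submatrix ((↑) : ↥(S ∆ univ.map .inl) → k ⊕ l) (↑)).det := by
  rw [← det_submatrix_inl, ← det_piecewiseRows_one, ← det_piecewiseRows_one,
    ← det_piecewiseRows_one, ← det_mul, piecewiseRows_mul, ppt_mul_piecewiseRows_inl h,
    Matrix.one_mul, piecewiseRows_piecewiseRows_symmDiff]

end PrincipalPivot

end Matrix

namespace IsPMatrix

open Matrix

theorem exists_pos_det_submatrix {ι : Type*} [Fintype ι] [DecidableEq ι] {A : Matrix ι ι ℂ}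
    (hA : IsPMatrix A) (S : Finset ι) :
    ∃ r : ℝ, 0 < r ∧ (A.submatrix ((↑) : S → ι) (↑)).det = r := by
  obtain rfl | hS := S.eq_empty_or_nonempty
  · exact ⟨1, one_pos, by simp⟩
  · exact hA S hS

theorem ppt {k l : Type*} [Fintype k] [Fintype l] [DecidableEq k] [DecidableEq l]
    {M : Matrix (k ⊕ l) (k ⊕ l) ℂ} (hM : IsPMatrix M) : IsPMatrix M.ppt := by
  obtain ⟨r₀, hr₀, hdet₀⟩ := hM.exists_pos_det_submatrix (univ.map .inl)
  rw [det_submatrix_inl] at hdet₀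
  have h : IsUnit M.toBlocks₁₁.det := by
    rw [hdet₀, isUnit_iff_ne_zero]
    exact_mod_cast hr₀.ne'
  intro S _
  obtain ⟨r, hr, hdet⟩ := hM.exists_pos_det_submatrix (S ∆ univ.map .inl)
  refine ⟨r / r₀, div_pos hr hr₀, ?_⟩
  rw [← det_submatrix_ppt_mul_det_toBlocks₁₁ h, hdet₀] at hdet
  rw [Complex.ofReal_div, eq_div_iff (by exact_mod_cast hr₀.ne')]
  exact hdet

end IsPMatrix

/-- `A` is a P-matrix iff `ppt(A)` is a P-matrix. -/
theorem stmt_14 {k l : Type*} [Fintype k] [Fintype l] [DecidableEq k] [DecidableEq l]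
    (A11 : Matrix k k ℂ) (A12 : Matrix k l ℂ) (A21 : Matrix l k ℂ) (A22 : Matrix l l ℂ)
    (h : IsUnit A11.det) :
    IsPMatrix (Matrix.fromBlocks A11 A12 A21 A22) ↔
    IsPMatrix (Matrix.fromBlocks A11⁻¹ (-(A11⁻¹ * A12)) (A21 * A11⁻¹)
      (A22 - A21 * A11⁻¹ * A12)) := by
  rw [← Matrix.ppt_fromBlocks]
  refine ⟨IsPMatrix.ppt, fun hP => ?_⟩
  rw [← Matrix.ppt_ppt (M := Matrix.fromBlocks A11 A12 A21 A22)
    (by rwa [Matrix.toBlocks_fromBlocks₁₁])]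
  exact hP.ppt
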